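/- Assume Ledoux's inequality: ∫₀^∞ I(λ_f(s)) ds ≤ ∫_{ℝⁿ} |∇f| dγₙ for every Lipschitz function f. Then for every Lipschitz f and every 0 < s < s+h < 1, the truncation argument yields (f*(s) - f*(s+h)) · min(I(s+h), I(s)) ≤ ∫₀ʰ |∇f|*(t) dt. In particular, f* is locally absolutely continuous on (0,1). -/

import Mathlib

open MeasureTheory Real

/-- The standard one-dimensional Gaussian density `φ(x) = (2π)^{-1/2} e^{-x²/2}`. -/
noncomputable def gaussPdf (x : ℝ) : ℝ := (2 * Real.pi) ^ (-(1:ℝ)/2) * Real.exp (-x^2 / 2)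

/-- The standard Gaussian cumulative distribution function `Φ(r) = ∫_{-∞}^r φ(t) dt`. -/
noncomputable def gaussCdf (r : ℝ) : ℝ := ∫ t in Set.Iic r, gaussPdf t

/-- The inverse of `Φ`. -/
noncomputable def gaussCdfInv : ℝ → ℝ := Function.invFun gaussCdf

/-- The Gaussian isoperimetric function `I(t) = φ(Φ⁻¹(t))` on `(0,1)`, with `I(0)=I(1)=0`. -/
noncomputable def Igauss (t : ℝ) : ℝ :=
  if t = 0 ∨ t = 1 then 0 else gaussPdf (gaussCdfInv t)

open scoped ENNReal

/-- The standard Gaussian measure `γₙ` on `ℝⁿ`. -/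
noncomputable def gaussMeasure (n : ℕ) : Measure (Fin n → ℝ) :=
  Measure.pi fun _ => ProbabilityTheory.gaussianReal 0 1

/-- The Gaussian distribution function `λ_f(t) = γₙ({|f| > t})`. -/
noncomputable def distFun (n : ℕ) (f : (Fin n → ℝ) → ℝ) (t : ℝ) : ℝ :=
  (gaussMeasure n {x | t < |f x|}).toReal

/-- The decreasing rearrangement of `f` with respect to `γₙ`:
`f*(s) = inf {t ≥ 0 : λ_f(t) ≤ s}`. -/
noncomputable def rearr (n : ℕ) (f : (Fin n → ℝ) → ℝ) (s : ℝ) : ℝ :=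
  sInf {t : ℝ | 0 ≤ t ∧ distFun n f t ≤ s}

/-- The maximal function of the rearrangement, `f**(t) = (1/t) ∫₀ᵗ f*(s) ds`. -/
noncomputable def rearr2 (n : ℕ) (f : (Fin n → ℝ) → ℝ) (t : ℝ) : ℝ :=
  (1/t) * ∫ s in (0:ℝ)..t, rearr n f s

/-- The modulus of the gradient, `|∇f|(x) = ‖Df(x)‖`. -/
noncomputable def gradNorm (n : ℕ) (f : (Fin n → ℝ) → ℝ) (x : Fin n → ℝ) : ℝ :=
  ‖fderiv ℝ f x‖

/-- The Gaussian symmetrization `f°(x) = f*(Φ(x₁))`. -/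
noncomputable def gaussSymm (n : ℕ) [NeZero n] (f : (Fin n → ℝ) → ℝ)
    (x : Fin n → ℝ) : ℝ :=
  rearr n f (gaussCdf (x 0))


/-!
Put `a = f*(s+h) ≤ b = f*(s)` and apply Ledoux's inequality to the truncation
`g = min (max |f| a) b - a`. For `0 < u < b - a` one has `λ_g(u) = λ_f(a + u) ∈ (s, s+h]`, so
quasi-concavity of `I` bounds the left side below by `(b - a) · min (I(s+h)) (I(s))`. The gradient
of `g` is `|∇f|` on `{a < |f| < b}` and vanishes elsewhere; that set has measure at most `h`, so
the Hardy–Littlewood inequality bounds the right side by `∫₀ʰ |∇f|*`. As `|∇f| ≤ Lip f`, this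
makes `f*` Lipschitz on every `[a, b] ⊂ (0,1)`, hence absolutely continuous there, and the
fundamental theorem of calculus applies.
-/

open Set Filter ProbabilityTheory
open scoped NNReal Topology

section GaussianIsoperimetricFunction

lemma gaussPdf_eq_gaussianPDFReal : gaussPdf = gaussianPDFReal 0 1 := by
  ext x
  rw [gaussPdf, gaussianPDFReal, NNReal.coe_one, mul_one, sub_zero, sqrt_eq_rpow,
    ← rpow_neg (by positivity)]
  norm_num

lemma gaussPdf_pos (x : ℝ) : 0 < gaussPdf x := by
  rw [gaussPdf_eq_gaussianPDFReal]; exact gaussianPDFReal_pos _ _ _ one_ne_zero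

lemma continuous_gaussPdf : Continuous gaussPdf := by
  unfold gaussPdf; fun_prop

lemma integrable_gaussPdf : Integrable gaussPdf := by
  rw [gaussPdf_eq_gaussianPDFReal]; exact integrable_gaussianPDFReal _ _

lemma gaussPdf_le_gaussPdf {x y : ℝ} (h : |x| ≤ |y|) : gaussPdf y ≤ gaussPdf x := by
  unfold gaussPdf
  have : x ^ 2 ≤ y ^ 2 := sq_le_sq.2 h
  gcongr

lemma gaussPdf_le_gaussPdf_zero (x : ℝ) : gaussPdf x ≤ gaussPdf 0 :=
  gaussPdf_le_gaussPdf (by simp)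

lemma min_gaussPdf_le {x y z : ℝ} (hxy : x ≤ y) (hyz : y ≤ z) :
    min (gaussPdf x) (gaussPdf z) ≤ gaussPdf y := by
  rcases le_total 0 y with hy | hy
  · exact (min_le_right _ _).trans
      (gaussPdf_le_gaussPdf (by rw [abs_of_nonneg hy, abs_of_nonneg (hy.trans hyz)]; exact hyz))
  · exact (min_le_left _ _).trans
      (gaussPdf_le_gaussPdf (by rw [abs_of_nonpos hy, abs_of_nonpos (hxy.trans hy)]; linarith))

lemma gaussCdf_eq_cdf : gaussCdf = cdf (gaussianReal 0 1) := by
  ext r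
  rw [cdf_eq_real, measureReal_def, gaussianReal_apply_eq_integral _ one_ne_zero,
    ENNReal.toReal_ofReal (setIntegral_nonneg measurableSet_Iic
      fun x _ => gaussianPDFReal_nonneg _ _ x), gaussCdf, gaussPdf_eq_gaussianPDFReal]

lemma gaussCdf_sub_gaussCdf (x y : ℝ) : gaussCdf y - gaussCdf x = ∫ t in x..y, gaussPdf t :=
  intervalIntegral.integral_Iic_sub_Iic integrable_gaussPdf.integrableOn
    integrable_gaussPdf.integrableOn

lemma continuous_gaussCdf : Continuous gaussCdf := by
  have : gaussCdf = fun y => gaussCdf 0 + ∫ t in (0:ℝ)..y, gaussPdf t := by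
    ext y; rw [← gaussCdf_sub_gaussCdf]; ring
  rw [this]
  exact continuous_const.add (intervalIntegral.continuous_primitive
    (fun _ _ => continuous_gaussPdf.intervalIntegrable _ _) 0)

lemma strictMono_gaussCdf : StrictMono gaussCdf := fun x y hxy => by
  have := intervalIntegral.intervalIntegral_pos_of_pos_on
    (continuous_gaussPdf.intervalIntegrable x y) (fun t _ => gaussPdf_pos t) hxy
  linarith [gaussCdf_sub_gaussCdf x y]

lemma range_gaussCdf : range gaussCdf = Ioo 0 1 := by
  apply Subset.antisymm
  · rintro _ ⟨r, rfl⟩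
    have h0 : 0 ≤ gaussCdf (r - 1) := gaussCdf_eq_cdf ▸ cdf_nonneg _ _
    have h1 : gaussCdf (r + 1) ≤ 1 := gaussCdf_eq_cdf ▸ cdf_le_one _ _
    exact ⟨h0.trans_lt (strictMono_gaussCdf (by linarith)),
      (strictMono_gaussCdf (by linarith)).trans_le h1⟩
  · rintro t ⟨ht0, ht1⟩
    obtain ⟨x, hx⟩ := ((gaussCdf_eq_cdf ▸ tendsto_cdf_atBot _).eventually (gt_mem_nhds ht0)).exists
    obtain ⟨y, hy⟩ := ((gaussCdf_eq_cdf ▸ tendsto_cdf_atTop _).eventually (lt_mem_nhds ht1)).exists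
    exact intermediate_value_univ x y continuous_gaussCdf ⟨hx.le, hy.le⟩

lemma gaussCdf_gaussCdfInv {t : ℝ} (ht : t ∈ Ioo 0 1) : gaussCdf (gaussCdfInv t) = t :=
  Function.invFun_eq (by rw [← mem_range, range_gaussCdf]; exact ht)

lemma monotoneOn_gaussCdfInv : MonotoneOn gaussCdfInv (Ioo 0 1) := fun t ht u hu htu => by
  rw [← strictMono_gaussCdf.le_iff_le, gaussCdf_gaussCdfInv ht, gaussCdf_gaussCdfInv hu]
  exact htu

lemma measurable_gaussCdfInv : Measurable gaussCdfInv :=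
  (continuous_gaussCdf.measurableEmbedding strictMono_gaussCdf.injective).measurable_extend
    measurable_id measurable_const

lemma Igauss_of_mem_Ioo {t : ℝ} (ht : t ∈ Ioo 0 1) : Igauss t = gaussPdf (gaussCdfInv t) :=
  if_neg (by rintro (rfl | rfl) <;> simp at ht)

lemma Igauss_zero : Igauss 0 = 0 := if_pos (Or.inl rfl)

lemma Igauss_pos {t : ℝ} (ht : t ∈ Ioo 0 1) : 0 < Igauss t := by
  rw [Igauss_of_mem_Ioo ht]; exact gaussPdf_pos _

lemma Igauss_nonneg (t : ℝ) : 0 ≤ Igauss t := by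
  unfold Igauss; split_ifs
  exacts [le_rfl, (gaussPdf_pos _).le]

lemma Igauss_le (t : ℝ) : Igauss t ≤ gaussPdf 0 := by
  unfold Igauss; split_ifs
  exacts [(gaussPdf_pos 0).le, gaussPdf_le_gaussPdf_zero _]

lemma measurable_Igauss : Measurable Igauss :=
  Measurable.ite ((measurableSet_singleton 0).union (measurableSet_singleton 1))
    measurable_const (continuous_gaussPdf.measurable.comp measurable_gaussCdfInv)

/-- `Φ⁻¹` is monotone and `φ` is unimodal. -/
lemma min_Igauss_le {s t u : ℝ} (hs : s ∈ Ioo 0 1) (hu : u ∈ Ioo 0 1) (hst : s ≤ t)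
    (htu : t ≤ u) : min (Igauss s) (Igauss u) ≤ Igauss t := by
  have ht : t ∈ Ioo 0 1 := ⟨hs.1.trans_le hst, htu.trans_lt hu.2⟩
  rw [Igauss_of_mem_Ioo hs, Igauss_of_mem_Ioo hu, Igauss_of_mem_Ioo ht]
  exact min_gaussPdf_le (monotoneOn_gaussCdfInv hs ht hst) (monotoneOn_gaussCdfInv ht hu htu)

end GaussianIsoperimetricFunction

section LevelSets

variable {α : Type*} [MeasurableSpace α] {μ : Measure α} {F : α → ℝ}

lemma measure_setOf_lt_le_of_forall_gt {t : ℝ} {c : ℝ≥0∞}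
    (h : ∀ t' > t, μ {x | t' < F x} ≤ c) : μ {x | t < F x} ≤ c := by
  obtain ⟨u, hu_anti, hu_mem, hu_lim⟩ := exists_seq_strictAnti_tendsto' (lt_add_one t)
  have hunion : {x | t < F x} = ⋃ k, {x | u k < F x} := by
    ext x
    simp only [mem_ofPred_eq, mem_iUnion]
    refine ⟨fun hx => ?_, fun ⟨k, hk⟩ => (hu_mem k).1.trans hk⟩
    exact ((hu_lim.eventually (gt_mem_nhds hx)).exists)
  have hmono : Monotone fun k => {x | u k < F x} := fun i j hij x hx =>
    (hu_anti.antitone hij).trans_lt hx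
  rw [hunion, hmono.measure_iUnion]
  exact iSup_le fun k => h _ (hu_mem k).1

lemma le_measure_setOf_le_of_forall_lt [IsFiniteMeasure μ] (hF : Measurable F) {y t : ℝ}
    (hyt : y < t) {c : ℝ≥0∞} (h : ∀ t' ∈ Ioo y t, c ≤ μ {x | t' < F x}) :
    c ≤ μ {x | t ≤ F x} := by
  obtain ⟨u, hu_mono, hu_mem, hu_lim⟩ := exists_seq_strictMono_tendsto' hyt
  have hinter : {x | t ≤ F x} = ⋂ k, {x | u k < F x} := by
    ext x
    simp only [mem_ofPred_eq, mem_iInter]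
    exact ⟨fun hx k => (hu_mem k).2.trans_le hx, fun hx => le_of_tendsto' hu_lim fun k => (hx k).le⟩
  have hanti : Antitone fun k => {x | u k < F x} := fun i j hij x hx =>
    (hu_mono.monotone hij).trans_lt hx
  rw [hinter, hanti.measure_iInter
    (fun k => (measurableSet_lt measurable_const hF).nullMeasurableSet) ⟨0, measure_ne_top _ _⟩]
  exact le_iInf fun k => h _ (hu_mem k)

end LevelSets

instance (n : ℕ) : IsProbabilityMeasure (gaussMeasure n) := by
  unfold gaussMeasure; infer_instance

section Rearrangement

variable {n : ℕ} {F : (Fin n → ℝ) → ℝ}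

lemma ofReal_distFun (t : ℝ) :
    ENNReal.ofReal (distFun n F t) = gaussMeasure n {x | t < |F x|} :=
  ENNReal.ofReal_toReal (measure_ne_top _ _)

lemma antitone_distFun : Antitone (distFun n F) := fun _ _ h =>
  ENNReal.toReal_mono (measure_ne_top _ _) (measure_mono fun _ hx => h.trans_lt hx)

lemma distFun_eq_zero_of_le {M t : ℝ} (hM : ∀ x, |F x| ≤ M) (hMt : M ≤ t) :
    distFun n F t = 0 := by
  have : {x | t < |F x|} = ∅ :=
    eq_empty_of_forall_notMem fun x hx => (hM x).not_gt (hMt.trans_lt hx)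
  rw [distFun, this, measure_empty, ENNReal.toReal_zero]

lemma tendsto_distFun_atTop (hF : Measurable F) : Tendsto (distFun n F) atTop (𝓝 0) := by
  have hempty : ⋂ t : ℝ, {x | t < |F x|} = ∅ :=
    eq_empty_of_forall_notMem fun x hx => lt_irrefl |F x| (mem_iInter.1 hx |F x|)
  have := tendsto_measure_iInter_atTop (μ := gaussMeasure n) (s := fun t : ℝ => {x | t < |F x|})
    (fun t => (measurableSet_lt measurable_const hF.abs).nullMeasurableSet)
    (fun _ _ h _ hx => h.trans_lt hx) ⟨0, measure_ne_top _ _⟩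
  rw [hempty, measure_empty] at this
  exact (ENNReal.tendsto_toReal ENNReal.zero_ne_top).comp this

lemma nonempty_rearr_set (hF : Measurable F) {s : ℝ} (hs : 0 < s) :
    {t : ℝ | 0 ≤ t ∧ distFun n F t ≤ s}.Nonempty :=
  ((eventually_ge_atTop 0).and ((tendsto_distFun_atTop hF).eventually (ge_mem_nhds hs))).exists

lemma rearr_nonneg (s : ℝ) : 0 ≤ rearr n F s :=
  Real.sInf_nonneg fun _ ht => ht.1

lemma rearr_le {s t : ℝ} (ht : 0 ≤ t) (h : distFun n F t ≤ s) : rearr n F s ≤ t :=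
  csInf_le ⟨0, fun _ hu => hu.1⟩ ⟨ht, h⟩

lemma lt_distFun_of_lt_rearr {s t : ℝ} (ht : 0 ≤ t) (h : t < rearr n F s) :
    s < distFun n F t :=
  lt_of_not_ge fun hts => (rearr_le ht hts).not_gt h

/-- The infimum defining `f*(s)` is attained, by right continuity of `λ_f`. -/
lemma distFun_le_of_rearr_le (hF : Measurable F) {s t : ℝ} (hs : 0 < s)
    (h : rearr n F s ≤ t) : distFun n F t ≤ s := by
  refine ENNReal.toReal_le_of_le_ofReal hs.le (measure_setOf_lt_le_of_forall_gt fun t' ht' => ?_)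
  obtain ⟨u, hu, hut'⟩ := exists_lt_of_csInf_lt (nonempty_rearr_set hF hs) (h.trans_lt ht')
  rw [← ofReal_distFun]
  exact ENNReal.ofReal_le_ofReal ((antitone_distFun hut'.le).trans hu.2)

lemma rearr_le_rearr {s₁ s₂ : ℝ} (hne : {t : ℝ | 0 ≤ t ∧ distFun n F t ≤ s₁}.Nonempty)
    (h : s₁ ≤ s₂) : rearr n F s₂ ≤ rearr n F s₁ :=
  csInf_le_csInf ⟨0, fun _ hu => hu.1⟩ hne fun _ hu => ⟨hu.1, hu.2.trans h⟩

lemma antitoneOn_rearr (hF : Measurable F) : AntitoneOn (rearr n F) (Ioi 0) :=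
  fun _ hs _ _ h => rearr_le_rearr (nonempty_rearr_set hF hs) h

lemma rearr_le_of_abs_le {M s : ℝ} (hM : ∀ x, |F x| ≤ M) (hs : 0 ≤ s) : rearr n F s ≤ M :=
  rearr_le ((abs_nonneg _).trans (hM 0)) (by rw [distFun_eq_zero_of_le hM le_rfl]; exact hs)

lemma antitoneOn_rearr_of_abs_le {M : ℝ} (hM : ∀ x, |F x| ≤ M) :
    AntitoneOn (rearr n F) (Ici 0) := fun _ hs _ _ h =>
  rearr_le_rearr ⟨M, (abs_nonneg _).trans (hM 0), by
    rw [distFun_eq_zero_of_le hM le_rfl]; exact hs⟩ h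

lemma intervalIntegral_rearr_le_mul {M h : ℝ} (hM : ∀ x, |F x| ≤ M) (hh : 0 ≤ h) :
    ∫ t in (0:ℝ)..h, rearr n F t ≤ M * h := by
  refine (Real.le_norm_self _).trans ((intervalIntegral.norm_integral_le_of_norm_le_const
    fun t ht => ?_).trans_eq (by rw [sub_zero, abs_of_nonneg hh]))
  rw [uIoc_of_le hh] at ht
  rw [Real.norm_of_nonneg (rearr_nonneg _)]
  exact rearr_le_of_abs_le hM ht.1.le

lemma integrableOn_Igauss_distFun {M : ℝ} (hM : ∀ x, |F x| ≤ M) :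
    IntegrableOn (fun u => Igauss (distFun n F u)) (Ioi 0) := by
  refine Integrable.mono' (g := (Iic M).indicator fun _ => gaussPdf 0) ?_
    (measurable_Igauss.comp antitone_distFun.measurable).aestronglyMeasurable
    (ae_of_all _ fun u => ?_)
  · refine (integrable_indicator_iff measurableSet_Iic).2 (integrableOn_const ?_)
    rw [Measure.restrict_apply measurableSet_Iic, Iic_inter_Ioi]
    exact measure_Ioc_lt_top.ne
  · rw [Real.norm_of_nonneg (Igauss_nonneg _)]
    by_cases hu : u ∈ Iic M
    · rw [indicator_of_mem hu]
      exact Igauss_le _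
    · rw [indicator_of_notMem hu, distFun_eq_zero_of_le hM (not_le.1 hu).le, Igauss_zero]

end Rearrangement

section HardyLittlewood

variable {n : ℕ} {w : (Fin n → ℝ) → ℝ}

lemma measureReal_restrict_Ioc_lt_rearr (hw : Measurable w) {h t : ℝ} (hh : 0 ≤ h) (ht : 0 ≤ t) :
    (volume.restrict (Ioc 0 h)).real {s | t < rearr n w s} = min h (distFun n w t) := by
  have hset : {s | t < rearr n w s} ∩ Ioc 0 h = Iio (distFun n w t) ∩ Ioc 0 h := by
    ext s
    simp only [mem_inter_iff, mem_ofPred_eq, mem_Iio]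
    refine and_congr_left fun hs => ⟨lt_distFun_of_lt_rearr ht, fun hst => ?_⟩
    exact lt_of_not_ge fun hrs => (distFun_le_of_rearr_le hw hs.1 hrs).not_gt hst
  have hL : 0 ≤ min h (distFun n w t) := le_min hh ENNReal.toReal_nonneg
  rw [measureReal_restrict_apply' measurableSet_Ioc, hset]
  have hIoo := Real.volume_real_Ioo_of_le hL
  have hIoc := Real.volume_real_Ioc_of_le hL
  rw [sub_zero] at hIoo hIoc
  refine le_antisymm ?_ ?_
  · exact hIoc ▸ measureReal_mono (s₂ := Ioc 0 (min h (distFun n w t)))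
      (fun s hs => ⟨hs.2.1, le_min hs.2.2 hs.1.le⟩) measure_Ioc_lt_top.ne
  · exact hIoo ▸ measureReal_mono (s₁ := Ioo 0 (min h (distFun n w t)))
      (fun s hs => ⟨hs.2.trans_le (min_le_right _ _), hs.1, hs.2.le.trans (min_le_left _ _)⟩)
      ((measure_mono inter_subset_right).trans_lt measure_Ioc_lt_top).ne

lemma integrableOn_measureReal_restrict_Ioc_lt_rearr {K h : ℝ} (hwK : ∀ x, |w x| ≤ K)
    (hh : 0 ≤ h) :
    IntegrableOn (fun t => (volume.restrict (Ioc 0 h)).real {s | t < rearr n w s}) (Ioi 0) := by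
  refine Integrable.mono' (g := (Iic K).indicator fun _ => h) ?_ ?_ (ae_of_all _ fun t => ?_)
  · refine (integrable_indicator_iff measurableSet_Iic).2 (integrableOn_const ?_)
    rw [Measure.restrict_apply measurableSet_Iic, Iic_inter_Ioi]
    exact measure_Ioc_lt_top.ne
  · refine (Antitone.measurable fun t₁ t₂ h₁₂ => measureReal_mono (fun s hs => ?_)
      (measure_ne_top _ _)).aestronglyMeasurable
    exact h₁₂.trans_lt hs
  · rw [Real.norm_of_nonneg measureReal_nonneg]
    by_cases htK : t ∈ Iic K
    · rw [indicator_of_mem htK]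
      calc _ ≤ (volume.restrict (Ioc 0 h)).real univ := measureReal_mono (subset_univ _)
        _ = h := by rw [measureReal_restrict_apply_univ, Real.volume_real_Ioc_of_le hh, sub_zero]
    · have hempty : {s | t < rearr n w s} ∩ Ioc 0 h = ∅ := eq_empty_of_forall_notMem
        fun s hs => htK ((hs.1 : t < _).trans_le (rearr_le_of_abs_le hwK hs.2.1.le)).le
      rw [indicator_of_notMem htK, measureReal_restrict_apply' measurableSet_Ioc, hempty,
        measureReal_empty]

/-- Hardy–Littlewood: compare both sides through the layer-cake formula, level by level. -/
lemma setIntegral_le_intervalIntegral_rearr (hw : Measurable w) (hw0 : ∀ x, 0 ≤ w x) {K : ℝ}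
    (hwK : ∀ x, w x ≤ K) {E : Set (Fin n → ℝ)} {h : ℝ} (hh : 0 ≤ h)
    (hE : gaussMeasure n E ≤ ENNReal.ofReal h) :
    ∫ x in E, w x ∂gaussMeasure n ≤ ∫ s in (0:ℝ)..h, rearr n w s := by
  have hwK' : ∀ x, |w x| ≤ K := fun x => (abs_of_nonneg (hw0 x)).trans_le (hwK x)
  have hrearr : IntegrableOn (rearr n w) (Ioc 0 h) :=
    ((antitoneOn_rearr_of_abs_le hwK').mono Icc_subset_Ici_self).integrableOn_isCompact
      isCompact_Icc |>.mono_set Ioc_subset_Icc_self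
  have hw_int : Integrable w (gaussMeasure n) :=
    Integrable.of_bound hw.aestronglyMeasurable K
      (ae_of_all _ fun x => (Real.norm_eq_abs _).trans_le (hwK' x))
  rw [intervalIntegral.integral_of_le hh, hw_int.restrict.integral_eq_integral_meas_lt
    (ae_of_all _ hw0), hrearr.integral_eq_integral_meas_lt
    (ae_of_all _ fun _ => rearr_nonneg _)]
  refine integral_mono_of_nonneg (ae_of_all _ fun _ => measureReal_nonneg)
    (integrableOn_measureReal_restrict_Ioc_lt_rearr hwK' hh)
    ((ae_restrict_iff' measurableSet_Ioi).2 (ae_of_all _ fun t (ht : 0 < t) => ?_))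
  dsimp only
  rw [measureReal_restrict_Ioc_lt_rearr hw hh ht.le,
    measureReal_restrict_apply (measurableSet_lt measurable_const hw)]
  refine le_min ((measureReal_mono inter_subset_right).trans
    (ENNReal.toReal_le_of_le_ofReal hh hE)) ((measureReal_mono inter_subset_left).trans_eq ?_)
  simp only [distFun, measureReal_def, abs_of_nonneg (hw0 _)]

end HardyLittlewood

section Truncation

def truncAbs {α : Type*} (a b : ℝ) (f : α → ℝ) (x : α) : ℝ := min (max |f x| a) b - a

variable {α : Type*} {a b : ℝ} {f : α → ℝ}

lemma truncAbs_nonneg (hab : a ≤ b) (x : α) : 0 ≤ truncAbs a b f x :=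
  sub_nonneg.2 (le_min (le_max_right _ _) hab)

lemma truncAbs_le (x : α) : truncAbs a b f x ≤ b - a :=
  sub_le_sub_right (min_le_right _ _) a

lemma lt_truncAbs_iff {u : ℝ} (hu : 0 < u) (hub : u < b - a) (x : α) :
    u < truncAbs a b f x ↔ a + u < |f x| := by
  simp only [truncAbs, lt_sub_iff_add_lt', lt_min_iff, lt_max_iff]
  constructor
  · rintro ⟨h | h, -⟩
    exacts [h, absurd h (by linarith)]
  · exact fun h => ⟨Or.inl h, by linarith⟩

lemma LipschitzWith.truncAbs [PseudoMetricSpace α] {K : ℝ≥0} (hf : LipschitzWith K f) (a b : ℝ) :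
    LipschitzWith K (truncAbs a b f) := by
  have h := ((lipschitzWith_one_norm.comp hf).max_const a).min_const b
  rw [one_mul] at h
  refine LipschitzWith.of_dist_le_mul fun x y => ?_
  rw [_root_.truncAbs, _root_.truncAbs, dist_sub_right]
  exact h.dist_le_mul x y

lemma norm_fderiv_abs_comp {E : Type*} [NormedAddCommGroup E] [NormedSpace ℝ E] {g : E → ℝ}
    {x : E} (hg : ContinuousAt g x) (hx : g x ≠ 0) :
    ‖fderiv ℝ (fun y => |g y|) x‖ = ‖fderiv ℝ g x‖ := by
  rcases hx.lt_or_gt with hneg | hpos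
  · have hev : (fun y => |g y|) =ᶠ[𝓝 x] fun y => -g y :=
      (hg.eventually (gt_mem_nhds hneg)).mono fun y hy => abs_of_neg hy
    rw [hev.fderiv_eq, fderiv_fun_neg, norm_neg]
  · have hev : (fun y => |g y|) =ᶠ[𝓝 x] g :=
      (hg.eventually (lt_mem_nhds hpos)).mono fun y hy => abs_of_pos hy
    rw [hev.fderiv_eq]

/-- Off `{a < |f| < b}` the truncation sits at its minimum `0` or its maximum `b - a`. -/
lemma gradNorm_truncAbs {n : ℕ} {f : (Fin n → ℝ) → ℝ} (hf : Continuous f) (ha : 0 ≤ a)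
    (hab : a ≤ b) :
    gradNorm n (truncAbs a b f) = {x | a < |f x| ∧ |f x| < b}.indicator (gradNorm n f) := by
  ext x
  by_cases hx : x ∈ {x | a < |f x| ∧ |f x| < b}
  · have hev : truncAbs a b f =ᶠ[𝓝 x] fun y => |f y| - a := by
      filter_upwards [hf.abs.continuousAt.eventually (Ioo_mem_nhds hx.1 hx.2 : Ioo a b ∈ _)]
        with y hy
      rw [truncAbs, max_eq_left hy.1.le, min_eq_left hy.2.le]
    have hfx : f x ≠ 0 := abs_pos.1 (ha.trans_lt hx.1)
    rw [indicator_of_mem hx, gradNorm, gradNorm, hev.fderiv_eq, fderiv_sub_const,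
      norm_fderiv_abs_comp hf.continuousAt hfx]
  · rw [indicator_of_notMem hx, gradNorm, norm_eq_zero]
    rcases not_and_or.1 hx with hxa | hxb
    · refine IsLocalMin.fderiv_eq_zero (Eventually.of_forall fun y => ?_)
      rw [show truncAbs a b f x = 0 by
        rw [truncAbs, max_eq_right (not_lt.1 hxa), min_eq_left hab, sub_self]]
      exact truncAbs_nonneg hab y
    · refine IsLocalMax.fderiv_eq_zero (Eventually.of_forall fun y => ?_)
      rw [show truncAbs a b f x = b - a by
        rw [truncAbs, max_eq_left (hab.trans (not_lt.1 hxb)), min_eq_right (not_lt.1 hxb)]]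
      exact truncAbs_le y

end Truncation

section TruncationBound

variable {n : ℕ} {f : (Fin n → ℝ) → ℝ} {s h : ℝ}

lemma distFun_truncAbs {a b u : ℝ} (hu : 0 < u) (hub : u < b - a) :
    distFun n (truncAbs a b f) u = distFun n f (a + u) := by
  have hab : a ≤ b := by linarith
  unfold distFun
  congr 2
  ext x
  rw [mem_ofPred_eq, mem_ofPred_eq, abs_of_nonneg (truncAbs_nonneg hab x), lt_truncAbs_iff hu hub]

lemma measure_abs_mem_Ioo_rearr_le (hf : Measurable f) (hs : 0 < s) (hh : 0 ≤ h) :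
    gaussMeasure n {x | rearr n f (s + h) < |f x| ∧ |f x| < rearr n f s} ≤ ENNReal.ofReal h := by
  set a := rearr n f (s + h)
  set b := rearr n f s
  rcases le_or_gt b a with hba | hab
  · have hempty : {x | a < |f x| ∧ |f x| < b} = ∅ :=
      eq_empty_of_forall_notMem fun x hx => (hx.1.trans hx.2).not_ge hba
    rw [hempty, measure_empty]
    exact zero_le
  have hb : ENNReal.ofReal s ≤ gaussMeasure n {x | b ≤ |f x|} :=
    le_measure_setOf_le_of_forall_lt hf.abs hab fun t ht => by
      rw [← ofReal_distFun]
      exact ENNReal.ofReal_le_ofReal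
        (lt_distFun_of_lt_rearr ((rearr_nonneg _).trans ht.1.le) ht.2).le
  have ha : gaussMeasure n {x | a < |f x|} ≤ ENNReal.ofReal (s + h) := by
    rw [← ofReal_distFun]
    exact ENNReal.ofReal_le_ofReal (distFun_le_of_rearr_le hf (by linarith) le_rfl)
  have hdisj : Disjoint {x | a < |f x| ∧ |f x| < b} {x | b ≤ |f x|} :=
    disjoint_left.2 fun x hx hx' => (hx.2 : |f x| < b).not_ge hx'
  refine (ENNReal.add_le_add_iff_right (ENNReal.ofReal_ne_top (r := s))).1 ?_
  calc _ ≤ gaussMeasure n {x | a < |f x| ∧ |f x| < b} + gaussMeasure n {x | b ≤ |f x|} :=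
        add_le_add_right hb _
    _ = gaussMeasure n ({x | a < |f x| ∧ |f x| < b} ∪ {x | b ≤ |f x|}) :=
        (measure_union hdisj (measurableSet_le measurable_const hf.abs)).symm
    _ ≤ gaussMeasure n {x | a < |f x|} :=
        measure_mono (union_subset (fun x hx => hx.1) fun x hx => hab.trans_le hx)
    _ ≤ ENNReal.ofReal h + ENNReal.ofReal s := by
        rw [← ENNReal.ofReal_add hh hs.le, add_comm]
        exact ha

/-- Between the levels `a = f*(s+h)` and `b = f*(s)`, `λ_f` takes values in `(s, s+h]`. -/
lemma mul_min_Igauss_le_integral_Igauss_distFun_truncAbs (hf : Measurable f) (hs : 0 < s)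
    (hh : 0 ≤ h) (hsh : s + h < 1) :
    (rearr n f s - rearr n f (s + h)) * min (Igauss (s + h)) (Igauss s) ≤
      ∫ u in Ioi 0, Igauss (distFun n (truncAbs (rearr n f (s + h)) (rearr n f s) f) u) := by
  set a := rearr n f (s + h)
  set b := rearr n f s
  have hI : 0 ≤ ∫ u in Ioi 0, Igauss (distFun n (truncAbs a b f) u) :=
    setIntegral_nonneg measurableSet_Ioi fun _ _ => Igauss_nonneg _
  rcases le_or_gt b a with hba | hab
  · exact (mul_nonpos_of_nonpos_of_nonneg (sub_nonpos.2 hba)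
      (le_min (Igauss_nonneg _) (Igauss_nonneg _))).trans hI
  have hint : IntegrableOn (fun u => Igauss (distFun n (truncAbs a b f) u)) (Ioi 0) :=
    integrableOn_Igauss_distFun fun x => (abs_of_nonneg (truncAbs_nonneg hab.le x)).trans_le
      (truncAbs_le x)
  have hm : ∀ u ∈ Ioo 0 (b - a),
      min (Igauss (s + h)) (Igauss s) ≤ Igauss (distFun n (truncAbs a b f) u) := by
    intro u hu
    rw [distFun_truncAbs hu.1 hu.2, min_comm]
    have hlo : s < distFun n f (a + u) :=
      lt_distFun_of_lt_rearr (add_nonneg (rearr_nonneg _) hu.1.le) (by linarith [hu.2])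
    have hup : distFun n f (a + u) ≤ s + h :=
      distFun_le_of_rearr_le hf (by linarith) (le_add_of_nonneg_right hu.1.le)
    exact min_Igauss_le ⟨hs, by linarith⟩ ⟨by linarith, hsh⟩ hlo.le hup
  calc _ = volume.real (Ioo 0 (b - a)) • min (Igauss (s + h)) (Igauss s) := by
        rw [Real.volume_real_Ioo_of_le (by linarith), sub_zero, smul_eq_mul]
    _ ≤ ∫ u in Ioo 0 (b - a), Igauss (distFun n (truncAbs a b f) u) :=
        setIntegral_ge_of_const_le measurableSet_Ioo measure_Ioo_lt_top.ne hm
          (hint.mono_set Ioo_subset_Ioi_self)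
    _ ≤ _ := setIntegral_mono_set hint (ae_of_all _ fun _ => Igauss_nonneg _)
        Ioo_subset_Ioi_self.eventuallyLE

end TruncationBound

def LedouxInequality (n : ℕ) : Prop :=
  ∀ g : (Fin n → ℝ) → ℝ, (∃ K, LipschitzWith K g) →
    (∫ s in Ioi (0:ℝ), Igauss (distFun n g s)) ≤ ∫ x, gradNorm n g x ∂gaussMeasure n

section Consequences

variable {n : ℕ} {f : (Fin n → ℝ) → ℝ} {K : ℝ≥0}

theorem rearr_sub_rearr_mul_min_Igauss_le (hled : LedouxInequality n) (hf : LipschitzWith K f)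
    {s h : ℝ} (hs : 0 < s) (hh : 0 ≤ h) (hsh : s + h < 1) :
    (rearr n f s - rearr n f (s + h)) * min (Igauss (s + h)) (Igauss s) ≤
      ∫ t in (0:ℝ)..h, rearr n (gradNorm n f) t := by
  set a := rearr n f (s + h)
  set b := rearr n f s
  have hfm : Measurable f := hf.continuous.measurable
  have hab : a ≤ b :=
    antitoneOn_rearr hfm hs (show 0 < s + h by linarith) (le_add_of_nonneg_right hh)
  have hE : MeasurableSet {x | a < |f x| ∧ |f x| < b} :=
    (measurableSet_lt measurable_const hfm.abs).inter (measurableSet_lt hfm.abs measurable_const)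
  calc _ ≤ ∫ u in Ioi 0, Igauss (distFun n (truncAbs a b f) u) :=
        mul_min_Igauss_le_integral_Igauss_distFun_truncAbs hfm hs hh hsh
    _ ≤ ∫ x, gradNorm n (truncAbs a b f) x ∂gaussMeasure n := hled _ ⟨K, hf.truncAbs a b⟩
    _ = ∫ x in {x | a < |f x| ∧ |f x| < b}, gradNorm n f x ∂gaussMeasure n := by
        rw [gradNorm_truncAbs hf.continuous (rearr_nonneg _) hab, integral_indicator hE]
    _ ≤ _ := setIntegral_le_intervalIntegral_rearr (measurable_fderiv ℝ f).norm
        (fun _ => norm_nonneg _) (fun _ => norm_fderiv_le_of_lipschitz ℝ hf) hh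
        (measure_abs_mem_Ioo_rearr_le hfm hs hh)

lemma lipschitzOnWith_rearr (hled : LedouxInequality n) (hf : LipschitzWith K f) {a b : ℝ}
    (ha : 0 < a) (hb : b < 1) :
    LipschitzOnWith (Real.toNNReal (K / min (Igauss a) (Igauss b))) (rearr n f) (Icc a b) := by
  refine LipschitzOnWith.of_le_add_mul' _ fun x hx y hy => ?_
  have hA : a ∈ Ioo 0 1 := ⟨ha, hx.1.trans_lt (hx.2.trans_lt hb)⟩
  have hB : b ∈ Ioo 0 1 := ⟨ha.trans_le (hx.1.trans hx.2), hb⟩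
  have hm : 0 < min (Igauss a) (Igauss b) := lt_min (Igauss_pos hA) (Igauss_pos hB)
  rcases le_or_gt y x with hyx | hxy
  · exact le_add_of_le_of_nonneg (antitoneOn_rearr hf.continuous.measurable
      (ha.trans_le hy.1) (ha.trans_le hx.1) hyx) (by positivity)
  have hbound := rearr_sub_rearr_mul_min_Igauss_le hled hf (ha.trans_le hx.1) (sub_nonneg.2 hxy.le)
    (by linarith [hy.2])
  rw [add_sub_cancel] at hbound
  have hmin : min (Igauss a) (Igauss b) ≤ min (Igauss y) (Igauss x) :=
    le_min (min_Igauss_le hA hB hy.1 hy.2) (min_Igauss_le hA hB hx.1 hx.2)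
  have hgrad : ∀ z, |gradNorm n f z| ≤ K := fun z =>
    (abs_norm _).trans_le (norm_fderiv_le_of_lipschitz ℝ hf)
  rw [Real.dist_eq, abs_of_neg (sub_neg.2 hxy), neg_sub, ← sub_le_iff_le_add', div_mul_eq_mul_div,
    le_div_iff₀ hm]
  calc _ ≤ (rearr n f x - rearr n f y) * min (Igauss y) (Igauss x) :=
        mul_le_mul_of_nonneg_left hmin (sub_nonneg.2 (antitoneOn_rearr hf.continuous.measurable
          (ha.trans_le hx.1) (ha.trans_le hy.1) hxy.le))
    _ ≤ ∫ t in (0:ℝ)..y - x, rearr n (gradNorm n f) t := hbound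
    _ ≤ K * (y - x) := intervalIntegral_rearr_le_mul hgrad (sub_nonneg.2 hxy.le)

end Consequences

/-- Assuming Ledoux's inequality, the truncation argument yields the oscillation bound
`(f*(s) - f*(s+h)) min(I(s+h), I(s)) ≤ ∫₀ʰ |∇f|*(t) dt`; in particular `f*` is locally
absolutely continuous on `(0,1)` (it satisfies the fundamental theorem of calculus). -/
theorem ledoux_implies_truncation_bound (n : ℕ)
    (hled : ∀ g : (Fin n → ℝ) → ℝ, (∃ K, LipschitzWith K g) →
      (∫ s in Set.Ioi (0:ℝ), Igauss (distFun n g s)) ≤ ∫ x, gradNorm n g x ∂gaussMeasure n) :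
    ∀ f : (Fin n → ℝ) → ℝ, (∃ K, LipschitzWith K f) →
      (∀ s h : ℝ, 0 < s → 0 < h → s + h < 1 →
        (rearr n f s - rearr n f (s + h)) * min (Igauss (s + h)) (Igauss s) ≤
          ∫ t in (0:ℝ)..h, rearr n (gradNorm n f) t) ∧
      (∀ a b : ℝ, 0 < a → a ≤ b → b < 1 →
        rearr n f b = rearr n f a + ∫ s in a..b, deriv (rearr n f) s) := by
  rintro f ⟨K, hf⟩
  refine ⟨fun s h hs hh hsh => rearr_sub_rearr_mul_min_Igauss_le hled hf hs hh.le hsh,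
    fun a b ha hab hb => ?_⟩
  have hlip := (lipschitzOnWith_rearr hled hf ha hb).mono (uIcc_of_le hab).subset
  rw [hlip.absolutelyContinuousOnInterval.integral_deriv_eq_sub, add_sub_cancel]
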